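/- arXiv:math/0403303 — 4 statements merged into one kernel-verified Lean document; each statement's English description precedes it below -/
import Mathlib

section
/- Let c > 0, let m ≥ 1, and let g₁, …, g_m : ℝ → ℝ be smooth functions, each vanishing outside the interval [-c, c], that are linearly independent in the real vector space of functions ℝ → ℝ. Then for any real numbers a₁, …, a_m there exists a polynomial p ∈ ℝ[X] such that ∫_{-c}^{c} p(x) · g_j(x) dx = a_j for every j = 1, …, m. -/
open MeasureTheory intervalIntegral

/-- A continuous function supported in `[-c,c]` all of whose polynomial moments
vanish is identically zero. -/
lemma vanish_of_all_moments_zero (c : ℝ) (hc : 0 < c) (h : ℝ → ℝ)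
    (hh : Continuous h) (hsupp : ∀ x : ℝ, x ∉ Set.Icc (-c) c → h x = 0)
    (hint : ∀ p : Polynomial ℝ, ∫ x in (-c)..c, p.eval x * h x = 0) :
    h = 0 := by
  have hcc : (-c : ℝ) ≤ c := by linarith
  set H : C(Set.Icc (-c) c, ℝ) := ⟨fun x => h x, hh.comp continuous_subtype_val⟩ with hH
  have hbound : ∀ x ∈ Set.Icc (-c) c, |h x| ≤ ‖H‖ := by
    intro x hx
    have := H.norm_coe_le_norm ⟨x, hx⟩
    simpa [hH, Real.norm_eq_abs] using this
  -- the square has zero integral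
  have key : (∫ x in (-c)..c, h x * h x) = 0 := by
    set I := ∫ x in (-c)..c, h x * h x with hI
    have habs : ∀ ε > (0 : ℝ), |I| ≤ ε := by
      intro ε hε
      set K : ℝ := (‖H‖ + 1) * (2 * c) with hK
      have hK0 : 0 < K := by
        have : (0:ℝ) ≤ ‖H‖ := norm_nonneg _
        have : (0:ℝ) < ‖H‖ + 1 := by linarith
        positivity
      set ε' : ℝ := ε / K with hε'
      have hε'0 : 0 < ε' := div_pos hε hK0
      -- Stone–Weierstrass approximation
      have hmem : H ∈ (polynomialFunctions (Set.Icc (-c) c)).topologicalClosure := by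
        rw [polynomialFunctions_closure_eq_top]; trivial
      have hmem' : H ∈ closure (polynomialFunctions (Set.Icc (-c) c) : Set C(Set.Icc (-c) c, ℝ)) := hmem
      obtain ⟨q, hq, hdq⟩ := Metric.mem_closure_iff.1 hmem' ε' hε'0
      rw [polynomialFunctions_coe] at hq
      obtain ⟨p, rfl⟩ := hq
      have happrox : ∀ x ∈ Set.Icc (-c) c, |h x - p.eval x| ≤ ε' := by
        intro x hx
        have := ContinuousMap.dist_apply_le_dist (f := H)
          (g := Polynomial.toContinuousMapOnAlgHom (Set.Icc (-c) c) p) ⟨x, hx⟩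
        have h2 : dist (H ⟨x, hx⟩)
            ((Polynomial.toContinuousMapOnAlgHom (Set.Icc (-c) c) p) ⟨x, hx⟩) ≤ ε' :=
          this.trans hdq.le
        simpa [hH, Real.dist_eq, Polynomial.toContinuousMapOnAlgHom,
          Polynomial.toContinuousMapOn, Polynomial.toContinuousMap] using h2
      -- integrability
      have hint1 : IntervalIntegrable (fun x => h x * h x) volume (-c) c :=
        (hh.mul hh).intervalIntegrable _ _
      have hint2 : IntervalIntegrable (fun x => p.eval x * h x) volume (-c) c :=
        (p.continuous.mul hh).intervalIntegrable _ _
      have hdiff : I = ∫ x in (-c)..c, (h x - p.eval x) * h x := by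
        have := intervalIntegral.integral_sub hint1 hint2
        rw [hI, ← sub_zero (∫ x in (-c)..c, h x * h x), ← hint p, ← this]
        congr 1; funext x; ring
      have hnormle : |∫ x in (-c)..c, (h x - p.eval x) * h x| ≤ ε' * ‖H‖ * |c - (-c)| := by
        have := intervalIntegral.norm_integral_le_of_norm_le_const
          (C := ε' * ‖H‖) (f := fun x => (h x - p.eval x) * h x) (a := -c) (b := c) ?_
        · simpa [Real.norm_eq_abs] using this
        · intro x hx
          have hx' : x ∈ Set.Icc (-c) c := by
            rw [Set.uIoc_of_le hcc] at hx
            exact Set.Ioc_subset_Icc_self hx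
          have h1 := happrox x hx'
          have h2 := hbound x hx'
          have : |(h x - p.eval x) * h x| ≤ ε' * ‖H‖ := by
            rw [abs_mul]
            exact mul_le_mul h1 h2 (abs_nonneg _) hε'0.le
          simpa [Real.norm_eq_abs, abs_mul] using this
      have hcc2 : |c - (-c)| = 2 * c := by rw [abs_of_nonneg] <;> linarith
      have : |I| ≤ ε' * ‖H‖ * (2 * c) := by rw [hdiff]; rw [hcc2] at hnormle; exact hnormle
      have hle : ε' * ‖H‖ * (2 * c) ≤ ε' * K := by
        rw [hK, mul_assoc]
        apply mul_le_mul_of_nonneg_left _ hε'0.le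
        apply mul_le_mul_of_nonneg_right _ (by linarith)
        linarith [norm_nonneg H]
      have hεK : ε' * K = ε := by rw [hε']; field_simp [hK0.ne']
      linarith
    have : |I| ≤ 0 := le_of_forall_pos_le_add (by intro ε hε; simpa using habs ε hε)
    have := abs_eq_zero.mp (le_antisymm this (abs_nonneg _))
    exact this
  -- convert to an integral over all of ℝ
  have hsq_supp : ∀ x : ℝ, x ∉ Set.Icc (-c) c → h x * h x = 0 := by
    intro x hx; rw [hsupp x hx]; ring
  have hfull : (∫ x : ℝ, h x * h x) = 0 := by
    rw [← setIntegral_eq_integral_of_forall_compl_eq_zero (fun x hx => hsq_supp x hx)]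
    rw [integral_Icc_eq_integral_Ioc, ← intervalIntegral.integral_of_le hcc]
    exact key
  -- the square is nonneg, continuous, compactly supported, hence zero
  have hcs : HasCompactSupport (fun x => h x * h x) :=
    HasCompactSupport.intro isCompact_Icc hsq_supp
  have hintg : Integrable (fun x => h x * h x) :=
    (hh.mul hh).integrable_of_hasCompactSupport hcs
  have hnonneg : 0 ≤ fun x => h x * h x := fun x => mul_self_nonneg (h x)
  have hae : (fun x => h x * h x) =ᵐ[volume] 0 :=
    (integral_eq_zero_iff_of_nonneg hnonneg hintg).mp hfull
  have hmeas : volume (Function.support fun x => h x * h x) = 0 := by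
    have : volume {x | h x * h x ≠ 0} = 0 := by
      have := hae
      rw [Filter.EventuallyEq, ae_iff] at this
      simpa using this
    simpa [Function.support] using this
  have hopen : IsOpen (Function.support fun x => h x * h x) :=
    (hh.mul hh).isOpen_support
  have hempty : (Function.support fun x => h x * h x) = ∅ := by
    by_contra hne
    obtain ⟨x, hx⟩ := Set.nonempty_iff_ne_empty.mpr hne
    have := hopen.measure_pos volume ⟨x, hx⟩
    rw [hmeas] at this
    exact lt_irrefl 0 this
  funext x
  have : h x * h x = 0 := by
    by_contra hne
    have : x ∈ Function.support fun x => h x * h x := hne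
    rw [hempty] at this
    exact this
  exact mul_self_eq_zero.mp this

/-- Core of the paper's Theorem 4.3 (Robinson): for finitely many linearly
independent test functions supported in `[-c,c]` and prescribed values, some
polynomial realizes those values under the integral pairing. -/
theorem exists_polynomial_with_prescribed_pairings
    (c : ℝ) (hc : 0 < c) (m : ℕ) (hm : 1 ≤ m) (g : Fin m → ℝ → ℝ)
    (hsmooth : ∀ j, ContDiff ℝ (⊤ : ℕ∞) (g j))
    (hsupp : ∀ j, ∀ x : ℝ, x ∉ Set.Icc (-c) c → g j x = 0)
    (hli : LinearIndependent ℝ g) (a : Fin m → ℝ) :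
    ∃ p : Polynomial ℝ, ∀ j, ∫ x in (-c)..c, p.eval x * g j x = a j := by
  have hgc : ∀ j, Continuous (g j) := fun j => (hsmooth j).continuous
  have hii : ∀ (p : Polynomial ℝ) (j : Fin m),
      IntervalIntegrable (fun x => p.eval x * g j x) volume (-c) c :=
    fun p j => (p.continuous.mul (hgc j)).intervalIntegrable _ _
  -- the pairing as a linear map
  let L : Polynomial ℝ →ₗ[ℝ] (Fin m → ℝ) :=
    { toFun := fun p j => ∫ x in (-c)..c, p.eval x * g j x
      map_add' := by
        intro p q
        funext j
        show (∫ x in (-c)..c, (p + q).eval x * g j x)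
            = (∫ x in (-c)..c, p.eval x * g j x) + ∫ x in (-c)..c, q.eval x * g j x
        have : (∫ x in (-c)..c, (p + q).eval x * g j x)
            = ∫ x in (-c)..c, (p.eval x * g j x + q.eval x * g j x) := by
          congr 1; funext x; simp [add_mul]
        rw [this, intervalIntegral.integral_add (hii p j) (hii q j)]
      map_smul' := by
        intro r p
        funext j
        show (∫ x in (-c)..c, (r • p).eval x * g j x)
            = r * ∫ x in (-c)..c, p.eval x * g j x
        have : (∫ x in (-c)..c, (r • p).eval x * g j x)
            = ∫ x in (-c)..c, r * (p.eval x * g j x) := by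
          congr 1; funext x; simp [Polynomial.eval_smul, smul_eq_mul]; ring
        rw [this, intervalIntegral.integral_const_mul] }
  suffices hsurj : Function.Surjective L by
    obtain ⟨p, hp⟩ := hsurj a
    exact ⟨p, fun j => congrFun hp j⟩
  rw [← LinearMap.range_eq_top]
  by_contra hne
  obtain ⟨φ, hφ0, hφ⟩ :=
    Submodule.exists_dual_map_eq_bot_of_lt_top (lt_top_iff_ne_top.mpr hne) inferInstance
  have hφv : ∀ p : Polynomial ℝ, φ (L p) = 0 := by
    intro p
    have : φ (L p) ∈ (LinearMap.range L).map φ := ⟨L p, ⟨p, rfl⟩, rfl⟩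
    rw [hφ] at this
    simpa using this
  set d : Fin m → ℝ := fun j => φ (fun i => if j = i then 1 else 0) with hd
  have hφrep : ∀ v : Fin m → ℝ, φ v = ∑ j, v j * d j := by
    intro v
    rw [LinearMap.pi_apply_eq_sum_univ φ v]
    simp [hd, smul_eq_mul]
  -- the combined function
  set h : ℝ → ℝ := fun x => ∑ j, d j * g j x with hhdef
  have hhc : Continuous h := continuous_finset_sum _ fun j _ => continuous_const.mul (hgc j)
  have hhsupp : ∀ x : ℝ, x ∉ Set.Icc (-c) c → h x = 0 := by
    intro x hx
    simp only [hhdef]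
    rw [Finset.sum_eq_zero]
    intro j _
    rw [hsupp j x hx, mul_zero]
  have hhint : ∀ p : Polynomial ℝ, ∫ x in (-c)..c, p.eval x * h x = 0 := by
    intro p
    have heq : (∫ x in (-c)..c, p.eval x * h x)
        = ∑ j, d j * ∫ x in (-c)..c, p.eval x * g j x := by
      have : (∫ x in (-c)..c, p.eval x * h x)
          = ∫ x in (-c)..c, ∑ j, d j * (p.eval x * g j x) := by
        congr 1; funext x
        simp only [hhdef, Finset.mul_sum]
        congr 1; funext j; ring
      rw [this, intervalIntegral.integral_finset_sum]
      · exact Finset.sum_congr rfl fun j _ => intervalIntegral.integral_const_mul _ _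
      · intro j _
        exact (continuous_const.mul (p.continuous.mul (hgc j))).intervalIntegrable _ _
    rw [heq]
    have := hφv p
    rw [hφrep (L p)] at this
    have hLpj : ∀ j, L p j = ∫ x in (-c)..c, p.eval x * g j x := fun j => rfl
    calc ∑ j, d j * ∫ x in (-c)..c, p.eval x * g j x
        = ∑ j, L p j * d j := by
          apply Finset.sum_congr rfl; intro j _; rw [hLpj]; ring
      _ = 0 := this
  have hzero : h = 0 := vanish_of_all_moments_zero c hc h hhc hhsupp hhint
  -- linear independence forces d = 0
  have hd0 : ∀ j, d j = 0 := by
    have := Fintype.linearIndependent_iff.mp hli d ?_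
    · exact this
    · funext x
      have := congrFun hzero x
      simpa [hhdef, Finset.sum_apply] using this
  apply hφ0
  apply LinearMap.ext
  intro v
  rw [hφrep v]
  simp [hd0]
end

section
/- Let (X, dist_X) and (Y, dist_Y) be pseudometric spaces, let F ∈ Filter.Germ (Filter.hyperfilter ℕ) (X → Y) be an internal map (the germ of a sequence of maps f n : X → Y), acting on germs by F⋆ξ := Filter.Germ.map₂ (fun f x => f x) F ξ, and let q ∈ Filter.Germ (Filter.hyperfilter ℕ) X. Then F is S-continuous at q — meaning that for every germ ξ, if hdist ξ q is infinitesimal then hdist (F⋆ξ) (F⋆q) is infinitesimal — if and only if for every real ε > 0 there exists a real δ > 0 such that for every germ ξ, hdist ξ q < ↑δ implies hdist (F⋆ξ) (F⋆q) < ↑ε. -/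
open Filter

/-- The hyperreal-valued distance between two germs in the ultrapower of a
pseudometric space. -/
noncomputable def hdist {X : Type*} [PseudoMetricSpace X]
    (ξ η : Filter.Germ (Filter.hyperfilter ℕ : Filter ℕ) X) : Hyperreal :=
  Filter.Germ.map₂ dist ξ η

/-- The action of an internal map (a germ of maps) on a germ. -/
noncomputable def mapAct {X Y : Type*} (F : Filter.Germ (Filter.hyperfilter ℕ : Filter ℕ) (X → Y))
    (ξ : Filter.Germ (Filter.hyperfilter ℕ : Filter ℕ) X) :
    Filter.Germ (Filter.hyperfilter ℕ : Filter ℕ) Y :=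
  Filter.Germ.map₂ (fun f x => f x) F ξ

/-- The hyperreal distance between germs is nonnegative. -/
theorem hdist_nonneg' {X : Type*} [PseudoMetricSpace X]
    (ξ η : Filter.Germ (Filter.hyperfilter ℕ : Filter ℕ) X) : 0 ≤ hdist ξ η := by
  induction ξ using Filter.Germ.inductionOn with | h a =>
  induction η using Filter.Germ.inductionOn with | h b =>
  exact Filter.Germ.coe_le.2 (Filter.Eventually.of_forall fun n => dist_nonneg)

/-- A nonnegative hyperreal below every `1/(m+1)` is infinitesimal. -/
theorem infinitesimal_of_hdist_lt {x : Hyperreal} (h0 : 0 ≤ x)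
    (h : ∀ m : ℕ, x < ((1 : ℝ) / (m + 1) : ℝ)) : x.Infinitesimal := by
  refine Hyperreal.infinitesimal_def.2 fun r hr => ⟨lt_of_lt_of_le ?_ h0, ?_⟩
  · exact_mod_cast neg_neg_of_pos hr
  · obtain ⟨m, hm⟩ := exists_nat_one_div_lt hr
    exact (h m).trans (by exact_mod_cast hm)

/-- Paper Theorem 6.9 (single pseudometric case): an internal map is
S-continuous at a point `q` iff it satisfies the standard ε–δ condition. -/
theorem sContinuous_iff_standard_eps_delta
    {X Y : Type*} [PseudoMetricSpace X] [PseudoMetricSpace Y]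
    (F : Filter.Germ (Filter.hyperfilter ℕ : Filter ℕ) (X → Y))
    (q : Filter.Germ (Filter.hyperfilter ℕ : Filter ℕ) X) :
    (∀ ξ, (hdist ξ q).Infinitesimal → (hdist (mapAct F ξ) (mapAct F q)).Infinitesimal) ↔
    (∀ ε : ℝ, 0 < ε → ∃ δ : ℝ, 0 < δ ∧ ∀ ξ,
      hdist ξ q < (δ : Hyperreal) → hdist (mapAct F ξ) (mapAct F q) < (ε : Hyperreal)) := by
  constructor
  · intro hS
    by_contra hc
    push_neg at hc
    obtain ⟨ε, hε, hbad⟩ := hc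
    -- for each k, a bad germ at scale 1/(k+1)
    have hchoice : ∀ k : ℕ, ∃ ξ, hdist ξ q < ((1 : ℝ) / (k + 1) : ℝ) ∧
        (ε : Hyperreal) ≤ hdist (mapAct F ξ) (mapAct F q) := by
      intro k
      obtain ⟨ξ, h1, h2⟩ := hbad ((1 : ℝ) / (k + 1)) (by positivity)
      exact ⟨ξ, h1, h2⟩
    choose Ξ h1 h2 using hchoice
    -- representatives
    set f : ℕ → X → Y := Quotient.out F with hf
    set qs : ℕ → X := Quotient.out q with hqs
    have hF : Germ.ofFun f = F := Quotient.out_eq F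
    have hq : Germ.ofFun qs = q := Quotient.out_eq q
    set a : ℕ → ℕ → X := fun k => Quotient.out (Ξ k) with ha
    have hΞ : ∀ k, Germ.ofFun (a k) = Ξ k := fun k => Quotient.out_eq (Ξ k)
    -- the good sets
    set A : ℕ → Set ℕ := fun k => {n | dist (a k n) (qs n) < 1 / (k + 1) ∧
        ε ≤ dist (f n (a k n)) (f n (qs n))} with hA
    have hAU : ∀ k, ∀ᶠ n in (Filter.hyperfilter ℕ : Filter ℕ), n ∈ A k := by
      intro k
      have e1 : hdist (Germ.ofFun (a k)) (Germ.ofFun qs)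
          < (((1 : ℝ) / (k + 1) : ℝ) : Hyperreal) := by rw [hΞ, hq]; exact h1 k
      have e2 : (ε : Hyperreal) ≤ hdist (mapAct F (Germ.ofFun (a k))) (mapAct F (Germ.ofFun qs)) := by
        rw [hΞ, hq]; exact h2 k
      rw [← hF] at e2
      have e1' : ∀ᶠ n in (Filter.hyperfilter ℕ : Filter ℕ),
          dist (a k n) (qs n) < 1 / (k + 1) := Filter.Germ.coe_lt.1 e1
      have e2' : ∀ᶠ n in (Filter.hyperfilter ℕ : Filter ℕ),
          ε ≤ dist (f n (a k n)) (f n (qs n)) := Filter.Germ.coe_le.1 e2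
      exact e1'.and e2'
    -- finite intersections
    set B : ℕ → Set ℕ := fun k => ⋂ j ∈ Finset.range (k + 1), A j with hB
    have hBU : ∀ k, ∀ᶠ n in (Filter.hyperfilter ℕ : Filter ℕ), n ∈ B k := by
      intro k
      rw [hB]
      simp only [Set.mem_iInter]
      exact (Filter.eventually_all_finset _).2 fun j _ => hAU j
    have hBA : ∀ k n, n ∈ B k → n ∈ A k := by
      intro k n hn
      rw [hB] at hn
      simp only [Set.mem_iInter] at hn
      exact hn k (Finset.self_mem_range_succ k)
    -- diagonal sequence
    classical
    set g : ℕ → ℕ := fun n => Nat.findGreatest (fun k => n ∈ B k) n with hg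
    set x : ℕ → X := fun n => a (g n) n with hx
    have key : ∀ m : ℕ, ∀ n, m ≤ n → n ∈ B m → n ∈ A (g n) ∧ m ≤ g n := by
      intro m n hmn hnB
      exact ⟨hBA _ n (Nat.findGreatest_spec (P := fun k => n ∈ B k) hmn hnB),
        Nat.le_findGreatest (P := fun k => n ∈ B k) hmn hnB⟩
    have hsmall : (hdist (Germ.ofFun x) q).Infinitesimal := by
      rw [← hq]
      refine infinitesimal_of_hdist_lt (hdist_nonneg' _ _) fun m => ?_
      refine Filter.Germ.coe_lt.2 ?_
      have hc : ∀ᶠ n in (Filter.hyperfilter ℕ : Filter ℕ), m ≤ n := by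
        refine Filter.Eventually.filter_mono Filter.hyperfilter_le_cofinite ?_
        rw [Nat.cofinite_eq_atTop]
        exact Filter.eventually_ge_atTop m
      filter_upwards [hBU m, hc] with n hnB hmn
      obtain ⟨hnA, hmg⟩ := key m n hmn hnB
      calc dist (x n) (qs n) < 1 / (g n + 1) := hnA.1
        _ ≤ 1 / (m + 1) := by
            apply one_div_le_one_div_of_le (by positivity)
            have : (m : ℝ) ≤ g n := by exact_mod_cast hmg
            linarith
    have hbig : (ε : Hyperreal) ≤ hdist (mapAct F (Germ.ofFun x)) (mapAct F q) := by
      rw [← hq, ← hF]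
      refine Filter.Germ.coe_le.2 ?_
      filter_upwards [hBU 0] with n hnB
      exact (key 0 n (Nat.zero_le n) hnB).1.2
    have := Hyperreal.infinitesimal_def.1 (hS (Germ.ofFun x) hsmall) ε hε
    exact absurd this.2 (not_lt.2 hbig)
  · intro hED ξ hinf
    refine Hyperreal.infinitesimal_def.2 fun ε hε => ?_
    obtain ⟨δ, hδ, hδ'⟩ := hED ε hε
    have hξ : hdist ξ q < (δ : Hyperreal) :=
      (Hyperreal.infinitesimal_def.1 hinf δ hδ).2
    refine ⟨lt_of_lt_of_le ?_ (hdist_nonneg' _ _), hδ' ξ hξ⟩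
    exact_mod_cast neg_neg_of_pos hε
end

section
/- Let (X, dist_X) and (Y, dist_Y) be pseudometric spaces, f : X → Y, and p ∈ X. Then f is continuous at p if and only if its nonstandard extension is S-continuous at p: for every germ ξ ∈ Filter.Germ (Filter.hyperfilter ℕ) X, if Filter.Germ.map (fun x => dist_X x p) ξ is infinitesimal then Filter.Germ.map (fun x => dist_Y (f x) (f p)) ξ is infinitesimal. -/
/-- Paper Corollary 6.9.1: a standard map between pseudometric spaces is
continuous at `p` iff its nonstandard extension is S-continuous at `p`. -/
theorem continuousAt_iff_sContinuousAt
    {X Y : Type*} [PseudoMetricSpace X] [PseudoMetricSpace Y] (f : X → Y) (p : X) :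
    ContinuousAt f p ↔
    ∀ ξ : Filter.Germ (Filter.hyperfilter ℕ : Filter ℕ) X,
      Hyperreal.Infinitesimal (ξ.map (fun x => dist x p)) →
      Hyperreal.Infinitesimal (ξ.map (fun x => dist (f x) (f p))) := by
  constructor
  · intro hf ξ
    induction ξ using Filter.Germ.inductionOn with
    | h x =>
      rw [Filter.Germ.map_coe, Filter.Germ.map_coe]
      show Hyperreal.Infinitesimal (Hyperreal.ofSeq _) →
        Hyperreal.Infinitesimal (Hyperreal.ofSeq _)
      rw [Hyperreal.Infinitesimal, Hyperreal.Infinitesimal,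
        Hyperreal.isSt_ofSeq_iff_tendsto, Hyperreal.isSt_ofSeq_iff_tendsto]
      intro h
      have hx : Filter.Tendsto x (Filter.hyperfilter ℕ) (nhds p) :=
        tendsto_iff_dist_tendsto_zero.2 h
      exact tendsto_iff_dist_tendsto_zero.1 (hf.tendsto.comp hx)
  · intro h
    by_contra hc
    rw [Metric.continuousAt_iff] at hc
    push_neg at hc
    obtain ⟨ε, hε, hδ⟩ := hc
    choose x hx1 hx2 using fun n : ℕ => hδ (1 / (n + 1)) (by positivity)
    have h1 : Hyperreal.Infinitesimal
        ((↑x : Filter.Germ (Filter.hyperfilter ℕ : Filter ℕ) X).map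
          (fun x => dist x p)) := by
      rw [Filter.Germ.map_coe]
      apply Hyperreal.infinitesimal_of_tendsto_zero
      apply squeeze_zero (fun n => dist_nonneg) (fun n => (hx1 n).le)
      exact tendsto_one_div_add_atTop_nhds_zero_nat
    have h2 := h _ h1
    rw [Filter.Germ.map_coe] at h2
    have h2' := Hyperreal.isSt_ofSeq_iff_tendsto.1 h2
    have := (h2'.eventually (gt_mem_nhds hε)).exists
    obtain ⟨n, hn⟩ := this
    exact absurd hn (not_lt.2 (hx2 n))
end

section
/- Let f : ℕ → ℝ → ℝ be a sequence of functions and let Φ be its germ, an internal function on the hyperreals. Assume Φ is S-continuous at every p ∈ ℝ, and that for every p ∈ ℝ the hyperreal Φ⋆↑p (the germ of the sequence n ↦ f n p) is not infinite. Then the function F : ℝ → ℝ defined by F p = Hyperreal.st (Φ⋆↑p) is continuous on ℝ. -/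
open MeasureTheory

/-- The action of an internal function on the hyperreals (a germ of standard
functions) on a hyperreal. -/
noncomputable def hact (Φ : Filter.Germ (Filter.hyperfilter ℕ : Filter ℕ) (ℝ → ℝ))
    (ξ : Hyperreal) : Hyperreal :=
  Filter.Germ.map₂ (fun f t => f t) Φ ξ

/-- S-continuity of an internal function at a standard point `p`. -/
def SContinuousAt (Φ : Filter.Germ (Filter.hyperfilter ℕ : Filter ℕ) (ℝ → ℝ)) (p : ℝ) : Prop :=
  ∀ ξ : Hyperreal, Hyperreal.Infinitesimal (ξ - ↑p) →
    Hyperreal.Infinitesimal (hact Φ ξ - hact Φ ↑p)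

open Filter Hyperreal in
lemma hact_ofSeq (f : ℕ → ℝ → ℝ) (x : ℕ → ℝ) :
    hact (↑f) (ofSeq x) = ofSeq (fun n => f n (x n)) := rfl

open Filter Hyperreal in
lemma coe_eq_ofSeq (r : ℝ) : (r : ℝ*) = ofSeq (fun _ => r) := rfl

open Filter Hyperreal in
/-- Overspill step: S-continuity at `p` yields a standard modulus of continuity. -/
lemma key_modulus (f : ℕ → ℝ → ℝ) (p : ℝ) (hSp : SContinuousAt (↑f) p)
    (eps : ℝ) (heps : 0 < eps) :
    ∃ δ : ℝ, 0 < δ ∧ ∀ q : ℝ, |q - p| < δ →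
      |hact (↑f) ↑q - hact (↑f) ↑p| ≤ (eps : ℝ*) := by
  classical
  set s : ℕ → Set ℝ :=
    fun n => {δ | δ ∈ Set.Icc (0:ℝ) 1 ∧ ∀ t, |t - p| < δ → |f n t - f n p| ≤ eps} with hs
  have h0 : ∀ n, (0:ℝ) ∈ s n := fun n =>
    ⟨⟨le_refl 0, zero_le_one⟩, fun t ht => absurd ht (abs_nonneg _).not_gt⟩
  have hbdd : ∀ n, BddAbove (s n) := fun n => ⟨1, fun δ hδ => hδ.1.2⟩
  set d : ℕ → ℝ := fun n => sSup (s n) with hdfn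
  have hd0 : ∀ n, 0 ≤ d n := fun n => le_csSup (hbdd n) (h0 n)
  have hd : ∀ n t, |t - p| < d n → |f n t - f n p| ≤ eps := by
    intro n t ht
    obtain ⟨δ, hδ, hlt⟩ := exists_lt_of_lt_csSup ⟨0, h0 n⟩ ht
    exact hδ.2 t hlt
  set D : ℝ* := ofSeq d with hD
  have hDni : ¬ Infinitesimal D := by
    intro hinf
    -- eventually d n < 1/2
    have hhalf : D < ((1/2 : ℝ) : ℝ*) := (infinitesimal_def.1 hinf (1/2) one_half_pos).2
    rw [coe_eq_ofSeq] at hhalf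
    have hev : ∀ᶠ n in hyperfilter ℕ, d n < 1/2 := ofSeq_lt_ofSeq.1 hhalf
    -- witnesses of failure just above the sup
    have hwit : ∀ n : ℕ, d n < 1/2 → 2 ≤ n →
        ∃ t, |t - p| < d n + 1/((n:ℝ)+1) ∧ eps < |f n t - f n p| := by
      intro n hdn hn
      by_contra h
      push_neg at h
      have hn' : (2:ℝ) ≤ (n:ℝ) := by exact_mod_cast hn
      have hpos : (0:ℝ) < 1/((n:ℝ)+1) := by positivity
      have hle : 1/((n:ℝ)+1) ≤ 1/2 := by
        rw [div_le_div_iff₀ (by linarith) (by norm_num)]; linarith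
      have hmem : d n + 1/((n:ℝ)+1) ∈ s n :=
        ⟨⟨by linarith [hd0 n], by linarith [hd0 n]⟩, h⟩
      have := le_csSup (hbdd n) hmem
      linarith
    -- choose witnesses
    set t : ℕ → ℝ := fun n =>
      if h : ∃ u, |u - p| < d n + 1/((n:ℝ)+1) ∧ eps < |f n u - f n p| then h.choose else p
      with ht
    have h2 : ∀ᶠ n in hyperfilter ℕ, 2 ≤ n :=
      Nat.hyperfilter_le_atTop (eventually_ge_atTop 2)
    have hevt : ∀ᶠ n in hyperfilter ℕ,
        |t n - p| < d n + 1/((n:ℝ)+1) ∧ eps < |f n (t n) - f n p| := by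
      filter_upwards [hev, h2] with n h1 h2
      have hx := hwit n h1 h2
      simp only [ht, dif_pos hx]
      exact hx.choose_spec
    set ν : ℝ* := ofSeq (fun n => 1/((n:ℝ)+1)) with hν
    have hνinf : Infinitesimal ν :=
      isSt_of_tendsto tendsto_one_div_add_atTop_nhds_zero_nat
    have hsum : Infinitesimal (D + ν) := hinf.add hνinf
    set ξ : ℝ* := ofSeq t with hξ
    -- ξ - p is infinitesimal
    have hξp : Infinitesimal (ξ - ↑p) := by
      rw [infinitesimal_def]
      intro r hr
      have hlt : ξ - ↑p < D + ν := by
        have : ofSeq (fun n => t n - p) < ofSeq (fun n => d n + 1/((n:ℝ)+1)) :=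
          ofSeq_lt_ofSeq.2 (hevt.mono fun n hn => (abs_lt.1 hn.1).2)
        exact this
      have hgt : -(D + ν) < ξ - ↑p := by
        have : ofSeq (fun n => -(d n + 1/((n:ℝ)+1))) < ofSeq (fun n => t n - p) :=
          ofSeq_lt_ofSeq.2 (hevt.mono fun n hn => neg_lt.1 (neg_lt.2 (abs_lt.1 hn.1).1))
        exact this
      have hsr : D + ν < (r : ℝ*) := (infinitesimal_def.1 hsum r hr).2
      have hsr' : -(r : ℝ*) < -(D + ν) := neg_lt_neg hsr
      exact ⟨hsr'.trans hgt, hlt.trans hsr⟩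
    -- yet the values differ by more than eps
    have hcont := hSp ξ hξp
    have hX : hact (↑f) ξ - hact (↑f) ↑p = ofSeq (fun n => f n (t n) - f n p) := rfl
    have hlt := infinitesimal_def.1 hcont eps heps
    rw [hX] at hlt
    have hub : ∀ᶠ n in hyperfilter ℕ, f n (t n) - f n p < eps := by
      have : ofSeq (fun n => f n (t n) - f n p) < ofSeq (fun _ => eps) := by
        rw [← coe_eq_ofSeq]; exact hlt.2
      exact ofSeq_lt_ofSeq.1 this
    have hlb : ∀ᶠ n in hyperfilter ℕ, -eps < f n (t n) - f n p := by
      have : ofSeq (fun _ => -eps) < ofSeq (fun n => f n (t n) - f n p) := by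
        rw [show ofSeq (fun _ => -eps) = -((eps:ℝ):ℝ*) from rfl]; exact hlt.1
      exact ofSeq_lt_ofSeq.1 this
    obtain ⟨n, hn1, hn2, hn3⟩ := (hub.and (hlb.and hevt)).exists
    have := abs_lt.2 ⟨hn2, hn1⟩
    linarith [hn3.2]
  -- extract a standard positive δ below D
  have hDpos : (0 : ℝ*) ≤ D := by
    rw [show (0:ℝ*) = ofSeq (fun _ => 0) from rfl]
    exact Filter.Germ.coe_le.2 (Eventually.of_forall hd0)
  rw [infinitesimal_def] at hDni
  push_neg at hDni
  obtain ⟨δ, hδpos, hfail⟩ := hDni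
  have hδD : (δ : ℝ*) ≤ D := by
    exact hfail ((neg_neg_of_pos (Hyperreal.coe_pos.2 hδpos)).trans_le hDpos)
  refine ⟨δ, hδpos, fun q hq => ?_⟩
  have hqD : ((|q - p| : ℝ) : ℝ*) < D := lt_of_lt_of_le (by exact_mod_cast hq) hδD
  rw [coe_eq_ofSeq] at hqD
  have hev : ∀ᶠ n in hyperfilter ℕ, |q - p| < d n := ofSeq_lt_ofSeq.1 hqD
  have hevv : ∀ᶠ n in hyperfilter ℕ, |f n q - f n p| ≤ eps :=
    hev.mono fun n hn => hd n q hn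
  have hX : hact (↑f) ↑q - hact (↑f) ↑p = ofSeq (fun n => f n q - f n p) := rfl
  rw [hX, abs_le]
  constructor
  · rw [show -((eps:ℝ):ℝ*) = ofSeq (fun _ => -eps) from rfl]
    exact Filter.Germ.coe_le.2 (hevv.mono fun n hn => (abs_le.1 hn).1)
  · rw [coe_eq_ofSeq]
    exact Filter.Germ.coe_le.2 (hevv.mono fun n hn => (abs_le.1 hn).2)

/-- Paper Theorem 7.2: the standard part of an internal function that is
S-continuous and limited at every standard point is a continuous function. -/
theorem continuous_st_of_sContinuous (f : ℕ → ℝ → ℝ)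
    (hS : ∀ p : ℝ, SContinuousAt (↑f) p)
    (hfin : ∀ p : ℝ, ¬ (hact (↑f) (↑p)).Infinite) :
    Continuous (fun p : ℝ => (hact (↑f) (↑p)).st) := by
  rw [Metric.continuous_iff]
  intro p ε hε
  obtain ⟨δ, hδ, h⟩ := key_modulus f p (hS p) (ε/2) (half_pos hε)
  refine ⟨δ, hδ, fun q hq => ?_⟩
  have h1 := h q (by rwa [Real.dist_eq] at hq)
  have hq' : Hyperreal.IsSt (hact (↑f) ↑q) ((hact (↑f) (↑q : ℝ*)).st) :=
    Hyperreal.isSt_st' (hfin q)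
  have hp' : Hyperreal.IsSt (hact (↑f) ↑p) ((hact (↑f) (↑p : ℝ*)).st) :=
    Hyperreal.isSt_st' (hfin p)
  have hsub := hq'.sub hp'
  have hub : (hact (↑f) (↑q:ℝ*)).st - (hact (↑f) (↑p:ℝ*)).st ≤ ε/2 :=
    hsub.le (Hyperreal.isSt_refl_real (ε/2)) (le_trans (le_abs_self _) h1)
  have hlb : -(ε/2) ≤ (hact (↑f) (↑q:ℝ*)).st - (hact (↑f) (↑p:ℝ*)).st := by
    refine (Hyperreal.isSt_refl_real (-(ε/2))).le hsub ?_
    have := neg_abs_le (hact (↑f) (↑q:ℝ*) - hact (↑f) (↑p:ℝ*))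
    calc ((-(ε/2) : ℝ) : ℝ*) = -((ε/2 : ℝ) : ℝ*) := by push_cast; ring
      _ ≤ -|hact (↑f) (↑q:ℝ*) - hact (↑f) (↑p:ℝ*)| := neg_le_neg h1
      _ ≤ _ := this
  rw [Real.dist_eq, abs_lt]
  constructor <;> linarith
end
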